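/- arXiv:1702.02183 — 11 statements merged into one kernel-verified Lean document; each statement's English description precedes it below -/
import Mathlib

section
/- Every mode m of the negative binomial distribution of order k, type I, with parameters r and p satisfies m ≤ k·r + ⌊(r - 1)·(1 - p^k·(1 + k·q)) / (q·p^k)⌋. -/
lemma sumA (p : ℝ) (k : ℕ) :
    (1 - p) * ∑ j ∈ Finset.Icc 1 k, p ^ (j - 1) = 1 - p ^ k := by
  induction k with
  | zero => simp
  | succ n ih =>
      rw [Finset.sum_Icc_succ_top (by omega : 1 ≤ n + 1)]
      simp only [Nat.add_sub_cancel]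
      rw [mul_add, ih]
      ring

lemma sumB (p : ℝ) (k : ℕ) :
    (1 - p) ^ 2 * ∑ j ∈ Finset.Icc 1 k, (j : ℝ) * p ^ (j - 1) =
      1 - p ^ k * (1 + k * (1 - p)) := by
  induction k with
  | zero => simp
  | succ n ih =>
      rw [Finset.sum_Icc_succ_top (by omega : 1 ≤ n + 1)]
      simp only [Nat.add_sub_cancel]
      rw [mul_add, ih]
      push_cast
      ring

/-- Theorem 2.1: every mode `m` of the negative binomial distribution of order `k`,
type I, with parameters `r` and `p` satisfies
`m ≤ k·r + ⌊(r-1)·(1 - p^k·(1 + k·q)) / (q·p^k)⌋`. -/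
theorem mode_upper_bound
    (k r : ℕ) (hk : 1 ≤ k) (hr : 1 ≤ r)
    (p q : ℝ) (hp0 : 0 < p) (hp1 : p < 1) (hq : q = 1 - p)
    (P : ℕ → ℝ)
    (hP0 : ∀ n, n < k * r → P n = 0)
    (hPkr : P (k * r) = p ^ (k * r))
    (hrec : ∀ n, k * r < n →
      ((n : ℝ) - k * r) * P n =
        q * ∑ j ∈ Finset.Icc 1 k,
          ((n : ℝ) - k * r + j * (r - 1)) * p ^ (j - 1) * P (n - j))
    (m : ℕ) (hm : ∀ n, P n ≤ P m) :
    (m : ℤ) ≤ k * r + ⌊((r : ℝ) - 1) * (1 - p ^ k * (1 + k * q)) / (q * p ^ k)⌋ := by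
  have hq0 : 0 < q := by rw [hq]; linarith
  have hq1 : q < 1 := by rw [hq]; linarith
  have hr1 : (1 : ℝ) ≤ (r : ℝ) := by exact_mod_cast hr
  have hpk : (0 : ℝ) < p ^ k := pow_pos hp0 k
  -- numerator nonneg: p^k * (1 + k*q) ≤ 1 by Bernoulli
  have hbern : 1 + (k : ℝ) * q ≤ (1 + q) ^ k := by
    have := one_add_mul_le_pow (a := q) (by linarith) k
    linarith
  have hnum : 0 ≤ 1 - p ^ k * (1 + k * q) := by
    have h1 : p ^ k * (1 + (k : ℝ) * q) ≤ p ^ k * (1 + q) ^ k :=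
      mul_le_mul_of_nonneg_left hbern (le_of_lt hpk)
    have h2 : p ^ k * (1 + q) ^ k = (1 - q ^ 2) ^ k := by
      rw [← mul_pow]; congr 1; rw [hq]; ring
    have h3 : (1 - q ^ 2) ^ k ≤ 1 := by
      apply pow_le_one₀ <;> nlinarith
    linarith [h1, h2 ▸ h1]
  have hBpos : 0 ≤ ((r : ℝ) - 1) * (1 - p ^ k * (1 + k * q)) / (q * p ^ k) := by
    apply div_nonneg
    · apply mul_nonneg <;> linarith
    · positivity
  by_cases hmk : m ≤ k * r
  · have : (0 : ℤ) ≤ ⌊((r : ℝ) - 1) * (1 - p ^ k * (1 + k * q)) / (q * p ^ k)⌋ :=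
      Int.floor_nonneg.mpr hBpos
    have : (m : ℤ) ≤ k * r := by exact_mod_cast hmk
    omega
  · have h1 : k * r < m := by omega
    have hc : (0 : ℝ) < (m : ℝ) - k * r := by
      have : (k * r : ℝ) < m := by exact_mod_cast h1
      linarith
    have hPm : 0 < P m := by
      have := hm (k * r)
      rw [hPkr] at this
      exact lt_of_lt_of_le (pow_pos hp0 _) this
    have hrec' := hrec m h1
    set c : ℝ := (m : ℝ) - k * r with hcdef
    -- bound each summand
    have hsum_le : ∑ j ∈ Finset.Icc 1 k, (c + j * ((r : ℝ) - 1)) * p ^ (j - 1) * P (m - j)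
        ≤ (∑ j ∈ Finset.Icc 1 k, (c + j * ((r : ℝ) - 1)) * p ^ (j - 1)) * P m := by
      rw [Finset.sum_mul]
      apply Finset.sum_le_sum
      intro j hj
      have hcoef : 0 ≤ (c + (j : ℝ) * ((r : ℝ) - 1)) * p ^ (j - 1) := by
        apply mul_nonneg
        · have : (0 : ℝ) ≤ (j : ℝ) * ((r : ℝ) - 1) :=
            mul_nonneg (Nat.cast_nonneg j) (by linarith)
          linarith
        · positivity
      exact mul_le_mul_of_nonneg_left (hm (m - j)) hcoef
    have hstep : c * P m ≤ q * (∑ j ∈ Finset.Icc 1 k, (c + j * ((r : ℝ) - 1)) * p ^ (j - 1)) * P m := by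
      rw [hrec']
      rw [mul_assoc]
      exact mul_le_mul_of_nonneg_left hsum_le (le_of_lt hq0)
    have hckey : c ≤ q * ∑ j ∈ Finset.Icc 1 k, (c + j * ((r : ℝ) - 1)) * p ^ (j - 1) :=
      le_of_mul_le_mul_right (by linarith [hstep]) hPm
    -- split the sum
    have hsplit : ∑ j ∈ Finset.Icc 1 k, (c + j * ((r : ℝ) - 1)) * p ^ (j - 1)
        = c * (∑ j ∈ Finset.Icc 1 k, p ^ (j - 1))
          + ((r : ℝ) - 1) * ∑ j ∈ Finset.Icc 1 k, (j : ℝ) * p ^ (j - 1) := by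
      rw [Finset.mul_sum, Finset.mul_sum, ← Finset.sum_add_distrib]
      exact Finset.sum_congr rfl (fun j _ => by ring)
    have hA := sumA p k
    have hB := sumB p k
    rw [← hq] at hA hB
    set S1 := ∑ j ∈ Finset.Icc 1 k, p ^ (j - 1)
    set S2 := ∑ j ∈ Finset.Icc 1 k, (j : ℝ) * p ^ (j - 1)
    rw [hsplit] at hckey
    -- derive c * q * p^k ≤ (r-1) * (1 - p^k*(1+k*q))
    have hkey : c * (q * p ^ k) ≤ ((r : ℝ) - 1) * (1 - p ^ k * (1 + k * q)) := by
      have h2 : c * q ≤ q ^ 2 * (c * S1 + ((r : ℝ) - 1) * S2) := by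
        have := mul_le_mul_of_nonneg_left hckey (le_of_lt hq0)
        nlinarith [this]
      have h3 : q ^ 2 * (c * S1 + ((r : ℝ) - 1) * S2)
          = c * q * (q * S1) + ((r : ℝ) - 1) * (q ^ 2 * S2) := by ring
      rw [hA, hB] at h3
      have h4 : c * (q * p ^ k) = c * q - c * q * (1 - p ^ k) := by ring
      linarith [h2, h3, h4]
    have hfinal : c ≤ ((r : ℝ) - 1) * (1 - p ^ k * (1 + k * q)) / (q * p ^ k) := by
      rw [le_div_iff₀ (by positivity)]
      exact hkey
    have hfloor : ((m : ℤ) - (k * r : ℤ)) ≤ ⌊((r : ℝ) - 1) * (1 - p ^ k * (1 + k * q)) / (q * p ^ k)⌋ := by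
      apply Int.le_floor.mpr
      push_cast
      exact hfinal
    omega
end

section
/- For k = 2, r = 2 and p = 1/2, a natural number m is a mode of the negative binomial distribution of order k, type I, with parameters r and p if and only if m ∈ {6, 7, 8}. -/
/-- Corollary 2.2(a): for `k = 2`, `r = 2`, `p = 1/2`, a natural number `m` is a
mode of the negative binomial distribution of order `k`, type I, if and only if
`m ∈ {6, 7, 8}`. -/
theorem mode_k2_r2_phalf
    (k r : ℕ) (hk : k = 2) (hr : r = 2)
    (p q : ℝ) (hp : p = 1 / 2) (hq : q = 1 - p)
    (P : ℕ → ℝ)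
    (hP0 : ∀ n, n < k * r → P n = 0)
    (hPkr : P (k * r) = p ^ (k * r))
    (hrec : ∀ n, k * r < n →
      ((n : ℝ) - k * r) * P n =
        q * ∑ j ∈ Finset.Icc 1 k,
          ((n : ℝ) - k * r + j * (r - 1)) * p ^ (j - 1) * P (n - j)) :
    ∀ m : ℕ, (∀ n, P n ≤ P m) ↔ (m = 6 ∨ m = 7 ∨ m = 8) := by
  subst hk hr hp hq
  have key : ∀ n : ℕ, 5 ≤ n →
      ((n:ℝ) - 4) * P n = (1/2)*((n:ℝ)-3)*P (n-1) + (1/4)*((n:ℝ)-2)*P (n-2) := by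
    intro n hn
    have h := hrec n (by omega)
    rw [show Finset.Icc 1 2 = {1, 2} by rfl] at h
    simp [Finset.sum_insert, Finset.mem_singleton] at h
    linarith
  have h4 : P 4 = 1/16 := by norm_num at hPkr; linarith
  have h5 : P 5 = 1/16 := by have := key 5 (by norm_num); norm_num at this; linarith [hP0 3 (by norm_num)]
  have h6 : P 6 = 5/64 := by have := key 6 (by norm_num); norm_num at this; linarith
  have h7 : P 7 = 5/64 := by have := key 7 (by norm_num); norm_num at this; linarith
  have h8 : P 8 = 5/64 := by have := key 8 (by norm_num); norm_num at this; linarith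
  have h9 : P 9 = 19/256 := by have := key 9 (by norm_num); norm_num at this; linarith
  have h10 : P 10 = 71/1024 := by have := key 10 (by norm_num); norm_num at this; linarith
  have hbig : ∀ n : ℕ, 9 ≤ n → P n < 5/64 := by
    have main : ∀ n : ℕ, 9 ≤ n → P n < 5/64 ∧ P (n+1) < 5/64 := by
      intro n hn
      induction n, hn using Nat.le_induction with
      | base => exact ⟨by rw [h9]; norm_num, by rw [h10]; norm_num⟩
      | succ n hn ih =>
        refine ⟨ih.2, ?_⟩
        have hk2 := key (n+2) (by omega)
        have e1 : n + 2 - 1 = n + 1 := by omega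
        have e2 : n + 2 - 2 = n := by omega
        rw [e1, e2] at hk2
        have hcast : (9:ℝ) ≤ (n:ℝ) := by exact_mod_cast hn
        push_cast at hk2
        have hn2 : (0:ℝ) < (n:ℝ) + 2 - 4 := by linarith
        have b1 : (1/2)*((n:ℝ)+2-3)*P (n+1) ≤ (1/2)*((n:ℝ)+2-3)*(5/64) := by
          apply mul_le_mul_of_nonneg_left (le_of_lt ih.2); linarith
        have b2 : (1/4)*((n:ℝ)+2-2)*P n < (1/4)*((n:ℝ)+2-2)*(5/64) := by
          apply mul_lt_mul_of_pos_left ih.1; linarith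
        have : ((n:ℝ)+2-4) * P (n+2) < ((n:ℝ)+2-4) * (5/64) := by
          calc ((n:ℝ)+2-4) * P (n+2) = (1/2)*((n:ℝ)+2-3)*P (n+1) + (1/4)*((n:ℝ)+2-2)*P n := hk2
            _ < (1/2)*((n:ℝ)+2-3)*(5/64) + (1/4)*((n:ℝ)+2-2)*(5/64) := by linarith
            _ ≤ ((n:ℝ)+2-4) * (5/64) := by nlinarith
        exact (mul_lt_mul_iff_right₀ hn2).mp this
    exact fun n hn => (main n hn).1
  have hub : ∀ n : ℕ, P n ≤ 5/64 := by
    intro n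
    rcases lt_or_ge n 4 with h | h
    · rw [hP0 n (by omega)]; norm_num
    rcases lt_or_ge n 9 with h' | h'
    · interval_cases n <;> linarith
    · exact le_of_lt (hbig n h')
  intro m
  constructor
  · intro hm
    by_contra hcon
    push_neg at hcon
    obtain ⟨hm6, hm7, hm8⟩ := hcon
    have h6m := hm 6
    rw [h6] at h6m
    rcases lt_or_ge m 4 with h | h
    · rw [hP0 m (by omega)] at h6m; norm_num at h6m
    rcases lt_or_ge m 9 with h' | h'
    · interval_cases m <;>
        first
          | exact hm6 rfl
          | exact hm7 rfl
          | exact hm8 rfl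
          | linarith
    · linarith [hbig m h']
  · rintro (rfl | rfl | rfl) n
    · rw [h6]; exact hub n
    · rw [h7]; exact hub n
    · rw [h8]; exact hub n
end

section
/- For k = 3, r = 2 and p = 1/2, a natural number m is a mode of the negative binomial distribution of order k, type I, with parameters r and p if and only if m = 16. -/
set_option maxHeartbeats 1000000 in
/-- Corollary 2.2(b): for `k = 3`, `r = 2`, `p = 1/2`, a natural number `m` is a
mode of the negative binomial distribution of order `k`, type I, if and only if
`m = 16`. -/
theorem mode_k3_r2_phalf
    (k r : ℕ) (hk : k = 3) (hr : r = 2)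
    (p q : ℝ) (hp : p = 1 / 2) (hq : q = 1 - p)
    (P : ℕ → ℝ)
    (hP0 : ∀ n, n < k * r → P n = 0)
    (hPkr : P (k * r) = p ^ (k * r))
    (hrec : ∀ n, k * r < n →
      ((n : ℝ) - k * r) * P n =
        q * ∑ j ∈ Finset.Icc 1 k,
          ((n : ℝ) - k * r + j * (r - 1)) * p ^ (j - 1) * P (n - j)) :
    ∀ m : ℕ, (∀ n, P n ≤ P m) ↔ m = 16 := by
  subst hk hr hp
  -- the specialized recurrence
  have key : ∀ n : ℕ, 6 < n → ((n:ℝ)-6) * P n =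
      (1/2)*(((n:ℝ)-5)*P (n-1) + ((n:ℝ)-4)*(1/2)*P (n-2) + ((n:ℝ)-3)*(1/4)*P (n-3)) := by
    intro n hn
    have h := hrec n (by omega)
    rw [show (Finset.Icc 1 3 : Finset ℕ) = {1,2,3} from rfl] at h
    simp [Finset.sum_insert, Finset.mem_insert] at h
    rw [hq] at h
    norm_num at h
    linarith
  have p0 : P 0 = 0 := hP0 0 (by norm_num)
  have p1 : P 1 = 0 := hP0 1 (by norm_num)
  have p2 : P 2 = 0 := hP0 2 (by norm_num)
  have p3 : P 3 = 0 := hP0 3 (by norm_num)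
  have p4 : P 4 = 0 := hP0 4 (by norm_num)
  have p5 : P 5 = 0 := hP0 5 (by norm_num)
  have p6 : P 6 = 1/64 := by norm_num at hPkr; linarith
  have p7 : P 7 = 1/64 := by
    have h := key 7 (by norm_num)
    norm_num [p6, p5, p4] at h
    linarith
  have p8 : P 8 = 5/256 := by
    have h := key 8 (by norm_num)
    norm_num [p7, p6, p5] at h
    linarith
  have p9 : P 9 = 3/128 := by
    have h := key 9 (by norm_num)
    norm_num [p8, p7, p6] at h
    linarith
  have p10 : P 10 = 13/512 := by
    have h := key 10 (by norm_num)
    norm_num [p9, p8, p7] at h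
    linarith
  have p11 : P 11 = 7/256 := by
    have h := key 11 (by norm_num)
    norm_num [p10, p9, p8] at h
    linarith
  have p12 : P 12 = 59/2048 := by
    have h := key 12 (by norm_num)
    norm_num [p11, p10, p9] at h
    linarith
  have p13 : P 13 = 61/2048 := by
    have h := key 13 (by norm_num)
    norm_num [p12, p11, p10] at h
    linarith
  have p14 : P 14 = 499/16384 := by
    have h := key 14 (by norm_num)
    norm_num [p13, p12, p11] at h
    linarith
  have p15 : P 15 = 505/16384 := by
    have h := key 15 (by norm_num)
    norm_num [p14, p13, p12] at h
    linarith
  have p16 : P 16 = 2027/65536 := by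
    have h := key 16 (by norm_num)
    norm_num [p15, p14, p13] at h
    linarith
  have p17 : P 17 = 505/16384 := by
    have h := key 17 (by norm_num)
    norm_num [p16, p15, p14] at h
    linarith
  -- nonnegativity
  have nonneg : ∀ n, 0 ≤ P n := by
    intro n
    induction n using Nat.strong_induction_on with
    | _ n ih =>
      rcases lt_trichotomy n 6 with hn | hn | hn
      · rw [hP0 n (by omega)]
      · subst hn; rw [p6]; norm_num
      · have h := key n hn
        have hn7 : (7:ℝ) ≤ (n:ℝ) := by exact_mod_cast hn
        have h1 : 0 ≤ ((n:ℝ)-5)*P (n-1) :=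
          mul_nonneg (by linarith) (ih (n-1) (by omega))
        have h2 : 0 ≤ ((n:ℝ)-4)*(1/2)*P (n-2) :=
          mul_nonneg (by linarith) (ih (n-2) (by omega))
        have h3 : 0 ≤ ((n:ℝ)-3)*(1/4)*P (n-3) :=
          mul_nonneg (by linarith) (ih (n-3) (by omega))
        by_contra hneg
        push_neg at hneg
        nlinarith [mul_pos (show (0:ℝ) < (n:ℝ)-6 by linarith)
          (show (0:ℝ) < -P n by linarith)]
  -- bound for n ≥ 14
  have bound1 : ∀ n, 14 ≤ n → P n ≤ 2027/65536 := by
    intro n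
    induction n using Nat.strong_induction_on with
    | _ n ih =>
      intro hn
      rcases Nat.lt_or_ge n 18 with hn' | hn'
      · interval_cases n
        · rw [p14]; norm_num
        · rw [p15]; norm_num
        · rw [p16]
        · rw [p17]; norm_num
      · have h := key n (by omega)
        have hn18 : (18:ℝ) ≤ (n:ℝ) := by exact_mod_cast hn'
        have hA := ih (n-1) (by omega) (by omega)
        have hB := ih (n-2) (by omega) (by omega)
        have hC := ih (n-3) (by omega) (by omega)
        have c1 : ((n:ℝ)-5)*P (n-1) ≤ ((n:ℝ)-5)*(2027/65536) :=
          mul_le_mul_of_nonneg_left hA (by linarith)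
        have c2 : ((n:ℝ)-4)*P (n-2) ≤ ((n:ℝ)-4)*(2027/65536) :=
          mul_le_mul_of_nonneg_left hB (by linarith)
        have c3 : ((n:ℝ)-3)*P (n-3) ≤ ((n:ℝ)-3)*(2027/65536) :=
          mul_le_mul_of_nonneg_left hC (by linarith)
        by_contra hgt
        push_neg at hgt
        nlinarith [mul_pos (show (0:ℝ) < (n:ℝ)-6 by linarith)
          (show (0:ℝ) < P n - 2027/65536 by linarith)]
  -- strict bound for n ≥ 18
  have bound2 : ∀ n, 18 ≤ n → P n ≤ 2020/65536 := by
    intro n hn'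
    have h := key n (by omega)
    have hn18 : (18:ℝ) ≤ (n:ℝ) := by exact_mod_cast hn'
    have hA := bound1 (n-1) (by omega)
    have hB := bound1 (n-2) (by omega)
    have hC := bound1 (n-3) (by omega)
    have c1 : ((n:ℝ)-5)*P (n-1) ≤ ((n:ℝ)-5)*(2027/65536) :=
      mul_le_mul_of_nonneg_left hA (by linarith)
    have c2 : ((n:ℝ)-4)*P (n-2) ≤ ((n:ℝ)-4)*(2027/65536) :=
      mul_le_mul_of_nonneg_left hB (by linarith)
    have c3 : ((n:ℝ)-3)*P (n-3) ≤ ((n:ℝ)-3)*(2027/65536) :=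
      mul_le_mul_of_nonneg_left hC (by linarith)
    by_contra hgt
    push_neg at hgt
    nlinarith [mul_pos (show (0:ℝ) < (n:ℝ)-6 by linarith)
      (show (0:ℝ) < P n - 2020/65536 by linarith)]
  intro m
  constructor
  · intro hmode
    by_contra hne
    have h16 : P 16 ≤ P m := hmode 16
    have hlt : P m < P 16 := by
      rcases Nat.lt_or_ge m 18 with hm | hm
      · interval_cases m <;>
          first
          | exact absurd rfl hne
          | (simp only [p0, p1, p2, p3, p4, p5, p6, p7, p8, p9, p10, p11, p12,
              p13, p14, p15, p16, p17]; norm_num)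
      · calc P m ≤ 2020/65536 := bound2 m hm
          _ < 2027/65536 := by norm_num
          _ = P 16 := p16.symm
    linarith
  · rintro rfl
    intro n
    rcases Nat.lt_or_ge n 18 with hn | hn
    · interval_cases n <;>
        simp only [p0, p1, p2, p3, p4, p5, p6, p7, p8, p9, p10, p11, p12,
          p13, p14, p15, p16, p17] <;> norm_num
    · calc P n ≤ 2020/65536 := bound2 n hn
        _ ≤ 2027/65536 := by norm_num
        _ = P 16 := p16.symm
end

section
/- For k = 2, r = 3 and p = 1/2, a natural number m is a mode of the negative binomial distribution of order k, type I, with parameters r and p if and only if m = 13. -/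
set_option maxHeartbeats 2000000

/-- Corollary 2.2(c): for `k = 2`, `r = 3`, `p = 1/2`, a natural number `m` is a
mode of the negative binomial distribution of order `k`, type I, if and only if
`m = 13`. -/
theorem mode_k2_r3_phalf
    (k r : ℕ) (hk : k = 2) (hr : r = 3)
    (p q : ℝ) (hp : p = 1 / 2) (hq : q = 1 - p)
    (P : ℕ → ℝ)
    (hP0 : ∀ n, n < k * r → P n = 0)
    (hPkr : P (k * r) = p ^ (k * r))
    (hrec : ∀ n, k * r < n →
      ((n : ℝ) - k * r) * P n =
        q * ∑ j ∈ Finset.Icc 1 k,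
          ((n : ℝ) - k * r + j * (r - 1)) * p ^ (j - 1) * P (n - j)) :
    ∀ m : ℕ, (∀ n, P n ≤ P m) ↔ m = 13 := by
  subst hk hr hp hq
  have key : ∀ n : ℕ, 6 < n → 4 * ((n : ℝ) - 6) * P n =
      2 * ((n : ℝ) - 4) * P (n - 1) + ((n : ℝ) - 2) * P (n - 2) := by
    intro n hn
    have h := hrec n (by omega)
    rw [show (Finset.Icc 1 2 : Finset ℕ) = {1, 2} from rfl] at h
    rw [Finset.sum_insert (by decide), Finset.sum_singleton] at h
    push_cast at h
    norm_num at h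
    linarith
  have h0 : P 0 = 0 := hP0 0 (by norm_num)
  have h1 : P 1 = 0 := hP0 1 (by norm_num)
  have h2 : P 2 = 0 := hP0 2 (by norm_num)
  have h3 : P 3 = 0 := hP0 3 (by norm_num)
  have h4 : P 4 = 0 := hP0 4 (by norm_num)
  have h5 : P 5 = 0 := hP0 5 (by norm_num)
  have h6 : P 6 = 1 / 64 := by norm_num at hPkr; linarith
  have h7 : P 7 = 3 / 128 := by
    have h := key 7 (by norm_num)
    norm_num [h6, h5] at h
    linarith
  have h8 : P 8 = 9 / 256 := by
    have h := key 8 (by norm_num)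
    norm_num [h7, h6] at h
    linarith
  have h9 : P 9 = 11 / 256 := by
    have h := key 9 (by norm_num)
    norm_num [h8, h7] at h
    linarith
  have h10 : P 10 = 51 / 1024 := by
    have h := key 10 (by norm_num)
    norm_num [h9, h8] at h
    linarith
  have h11 : P 11 = 111 / 2048 := by
    have h := key 11 (by norm_num)
    norm_num [h10, h9] at h
    linarith
  have h12 : P 12 = 233 / 4096 := by
    have h := key 12 (by norm_num)
    norm_num [h11, h10] at h
    linarith
  have h13 : P 13 = 237 / 4096 := by
    have h := key 13 (by norm_num)
    norm_num [h12, h11] at h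
    linarith
  have h14 : P 14 = 471 / 8192 := by
    have h := key 14 (by norm_num)
    norm_num [h13, h12] at h
    linarith
  have h15 : P 15 = 459 / 8192 := by
    have h := key 15 (by norm_num)
    norm_num [h14, h13] at h
    linarith
  have h16 : P 16 = 1761 / 32768 := by
    have h := key 16 (by norm_num)
    norm_num [h15, h14] at h
    linarith
  have h17 : P 17 = 3333 / 65536 := by
    have h := key 17 (by norm_num)
    norm_num [h16, h15] at h
    linarith
  have h18 : P 18 = 12473 / 262144 := by
    have h := key 18 (by norm_num)
    norm_num [h17, h16] at h
    linarith
  have h19 : P 19 = 23109 / 524288 := by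
    have h := key 19 (by norm_num)
    norm_num [h18, h17] at h
    linarith
  have h20 : P 20 = 42447 / 1048576 := by
    have h := key 20 (by norm_num)
    norm_num [h19, h18] at h
    linarith
  have h21 : P 21 = 38689 / 1048576 := by
    have h := key 21 (by norm_num)
    norm_num [h20, h19] at h
    linarith
  have h22 : P 22 = 140109 / 4194304 := by
    have h := key 22 (by norm_num)
    norm_num [h21, h20] at h
    linarith
  have h23 : P 23 = 252177 / 8388608 := by
    have h := key 23 (by norm_num)
    norm_num [h22, h21] at h
    linarith
  have h24 : P 24 = 451441 / 16777216 := by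
    have h := key 24 (by norm_num)
    norm_num [h23, h22] at h
    linarith
  have h25 : P 25 = 201057 / 8388608 := by
    have h := key 25 (by norm_num)
    norm_num [h24, h23] at h
    linarith
  have h26 : P 26 = 356595 / 16777216 := by
    have h := key 26 (by norm_num)
    norm_num [h25, h24] at h
    linarith
  have h27 : P 27 = 314955 / 16777216 := by
    have h := key 27 (by norm_num)
    norm_num [h26, h25] at h
    linarith
  have h28 : P 28 = 1108605 / 67108864 := by
    have h := key 28 (by norm_num)
    norm_num [h27, h26] at h
    linarith
  have h29 : P 29 = 1944465 / 134217728 := by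
    have h := key 29 (by norm_num)
    norm_num [h28, h27] at h
    linarith
  have h30 : P 30 = 13599505 / 1073741824 := by
    have h := key 30 (by norm_num)
    norm_num [h29, h28] at h
    linarith
  have h31 : P 31 = 23709783 / 2147483648 := by
    have h := key 31 (by norm_num)
    norm_num [h30, h29] at h
    linarith
  have h32 : P 32 = 41225349 / 4294967296 := by
    have h := key 32 (by norm_num)
    norm_num [h31, h30] at h
    linarith
  have h33 : P 33 = 35750711 / 4294967296 := by
    have h := key 33 (by norm_num)
    norm_num [h32, h31] at h
    linarith
  have h34 : P 34 = 123723351 / 17179869184 := by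
    have h := key 34 (by norm_num)
    norm_num [h33, h32] at h
    linarith
  have h35 : P 35 = 213619683 / 34359738368 := by
    have h := key 35 (by norm_num)
    norm_num [h34, h33] at h
    linarith
  have h36 : P 36 = 368080793 / 68719476736 := by
    have h := key 36 (by norm_num)
    norm_num [h35, h34] at h
    linarith
  have inv : ∀ m : ℕ, 0 < P (35 + m) ∧ 0 < P (36 + m) ∧
      (77 / 100) * P (35 + m) ≤ P (36 + m) ∧ P (36 + m) ≤ (9 / 10) * P (35 + m) := by
    intro m
    induction m with
    | zero =>
      refine ⟨?_, ?_, ?_, ?_⟩ <;> norm_num [h35, h36]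
    | succ m ih =>
      clear hP0 hPkr hrec h0 h1 h2 h3 h4 h5 h6 h7 h8 h9 h10 h11 h12 h13 h14 h15 h16 h17 h18 h19 h20 h21 h22 h23 h24 h25 h26 h27 h28 h29 h30 h31 h32 h33 h34 h35 h36
      obtain ⟨ha, hb, hl, hu⟩ := ih
      have h := key (37 + m) (by omega)
      have e1 : 37 + m - 1 = 36 + m := by omega
      have e2 : 37 + m - 2 = 35 + m := by omega
      rw [e1, e2] at h
      push_cast at h
      have hM : (0 : ℝ) ≤ (m : ℝ) := Nat.cast_nonneg m
      have e3 : 35 + (m + 1) = 36 + m := by omega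
      have e4 : 36 + (m + 1) = 37 + m := by omega
      rw [e3, e4]
      have hc : 0 < P (37 + m) := by nlinarith [mul_nonneg hM ha.le, mul_nonneg hM hb.le]
      refine ⟨hb, hc, ?_, ?_⟩
      · nlinarith [mul_nonneg hM ha.le, mul_nonneg hM hb.le,
          mul_le_mul_of_nonneg_left hu hM]
      · nlinarith [mul_nonneg hM ha.le, mul_nonneg hM hb.le,
          mul_le_mul_of_nonneg_left hl hM]
  have mono : ∀ m : ℕ, P (35 + m) ≤ P 35 := by
    intro m
    induction m with
    | zero => exact le_refl _
    | succ m ih =>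
      obtain ⟨ha, hb, hl, hu⟩ := inv m
      have e : 35 + (m + 1) = 36 + m := by omega
      rw [e]
      linarith
  have hlt : ∀ n : ℕ, n ≠ 13 → P n < P 13 := by
    intro n hn
    rcases lt_or_ge n 36 with h | h
    · interval_cases n <;>
        first
          | exact absurd rfl hn
          | norm_num [h0, h1, h2, h3, h4, h5, h6, h7, h8, h9, h10, h11, h12, h13,
              h14, h15, h16, h17, h18, h19, h20, h21, h22, h23, h24, h25, h26, h27,
              h28, h29, h30, h31, h32, h33, h34, h35]
    · have e : n = 35 + (n - 35) := by omega
      have := mono (n - 35)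
      rw [← e] at this
      calc P n ≤ P 35 := this
        _ < P 13 := by rw [h35, h13]; norm_num
  intro m
  constructor
  · intro h
    by_contra hm
    exact absurd (h 13) (not_le.mpr (hlt m hm))
  · rintro rfl n
    rcases eq_or_ne n 13 with rfl | hn
    · exact le_refl _
    · exact (hlt n hn).le
end

section
/- If q·r > 1, then for every natural number n with k·r ≤ n ≤ k·r + k one has P(n) > P(n - 1). -/
/-!
Write `N = k·r` and `S(n) = ∑_{j=1}^k p^(j-1) P(n-j)`. In the recurrence at `N + m` split the
weight `m + j(r-1)` as `(m - r + j(r-1)) + r`. After the shift `j ↦ j + 1` the first part is `p`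
times the recurrence sum at `N + m - 1`, up to a term `P(N + m - 1 - k)` that vanishes when
`m ≤ k`; with `p + q = 1` this gives, for `1 ≤ m ≤ k`,
`m P(N+m) = (m-1) P(N+m-1) + q r S(N+m)`.
The recurrence has nonnegative weights, so `P ≥ 0`, and `P > 0` from `N` on; hence
`S(N+m) ≥ P(N+m-1) > 0`, and `q r > 1` yields `m P(N+m) > m P(N+m-1)`.
-/

open Finset

theorem Finset.sum_Icc_add_one_add {M : Type*} [AddCommMonoid M] (g : ℕ → M) (k : ℕ) :
    ∑ j ∈ Icc 1 k, g (j + 1) + g 1 = ∑ j ∈ Icc 1 k, g j + g (k + 1) := by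
  induction k with
  | zero => simp
  | succ k ih =>
    rw [sum_Icc_succ_top (by omega), sum_Icc_succ_top (by omega), add_right_comm, ih,
      add_right_comm]

theorem Nat.one_le_of_one_lt_mul_cast {q : ℝ} {r : ℕ} (h : 1 < q * r) : 1 ≤ r :=
  Nat.one_le_iff_ne_zero.2 fun hr => by simp [hr] at h; linarith

namespace NegBinomialOrderK

/-- The sum on the right-hand side of the recurrence, with `n - k·r` replaced by `a`. -/
def weightedSum (k r : ℕ) (p : ℝ) (P : ℕ → ℝ) (a : ℝ) (n : ℕ) : ℝ :=
  ∑ j ∈ Icc 1 k, (a + j * (r - 1)) * p ^ (j - 1) * P (n - j)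

def laggedSum (k : ℕ) (p : ℝ) (P : ℕ → ℝ) (n : ℕ) : ℝ :=
  ∑ j ∈ Icc 1 k, p ^ (j - 1) * P (n - j)

variable {k r : ℕ} {p q : ℝ} {P : ℕ → ℝ}

theorem weightedSum_add (a b : ℝ) (n : ℕ) :
    weightedSum k r p P (a + b) n = weightedSum k r p P a n + b * laggedSum k p P n := by
  rw [weightedSum, weightedSum, laggedSum, mul_sum, ← sum_add_distrib]
  exact sum_congr rfl fun _ _ => by ring

theorem weightedSum_succ (a : ℝ) {n : ℕ} (hn : P (n - k) = 0) :
    weightedSum k r p P (a + 1 - r) (n + 1) = p * weightedSum k r p P a n + a * P n := by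
  have hshift := sum_Icc_add_one_add
    (fun j => (a + 1 - r + j * (r - 1)) * p ^ (j - 1) * P (n + 1 - j)) k
  simp only [Nat.add_sub_add_right, Nat.add_sub_cancel, hn, mul_zero, add_zero] at hshift
  rw [weightedSum, weightedSum, ← hshift, mul_sum]
  congr 1
  · refine sum_congr rfl fun j hj => ?_
    obtain ⟨i, rfl⟩ := Nat.exists_eq_add_of_le' (mem_Icc.1 hj).1
    rw [pow_succ]
    push_cast
    ring
  · push_cast
    ring

theorem weightedSum_nonneg (hr : 1 ≤ r) (hp : 0 ≤ p) {a : ℝ} (ha : 0 ≤ a) {n : ℕ}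
    (hP : ∀ j ∈ Icc 1 k, 0 ≤ P (n - j)) : 0 ≤ weightedSum k r p P a n := by
  have hr' : (0 : ℝ) ≤ r - 1 := by rw [sub_nonneg]; exact_mod_cast hr
  exact sum_nonneg fun j hj => by have := hP j hj; positivity

theorem apply_le_laggedSum (hk : 1 ≤ k) (hp : 0 ≤ p) (hP : ∀ n, 0 ≤ P n) (n : ℕ) :
    P n ≤ laggedSum k p P (n + 1) := by
  simpa [laggedSum] using
    single_le_sum (fun j _ => mul_nonneg (pow_nonneg hp (j - 1)) (hP (n + 1 - j)))
      (mem_Icc.2 ⟨le_rfl, hk⟩)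

end NegBinomialOrderK

open NegBinomialOrderK

structure IsNegBinomialOrderKPMF (k r : ℕ) (p q : ℝ) (P : ℕ → ℝ) : Prop where
  apply_of_lt : ∀ n, n < k * r → P n = 0
  apply_base : P (k * r) = p ^ (k * r)
  mul_apply : ∀ n, k * r < n → ((n : ℝ) - k * r) * P n = q * weightedSum k r p P (n - k * r) n

namespace IsNegBinomialOrderKPMF

variable {k r : ℕ} {p q : ℝ} {P : ℕ → ℝ}

theorem nonneg (h : IsNegBinomialOrderKPMF k r p q P) (hr : 1 ≤ r) (hp : 0 ≤ p) (hq : 0 ≤ q)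
    (n : ℕ) : 0 ≤ P n := by
  induction n using Nat.strong_induction_on with
  | _ n ih =>
    rcases lt_trichotomy n (k * r) with hn | rfl | hn
    · exact (h.apply_of_lt n hn).ge
    · rw [h.apply_base]; positivity
    · have hpos : (0 : ℝ) < n - k * r := by rw [sub_pos]; exact_mod_cast hn
      refine nonneg_of_mul_nonneg_right ?_ hpos
      rw [h.mul_apply n hn]
      exact mul_nonneg hq <| weightedSum_nonneg hr hp hpos.le fun j hj =>
        ih _ (Nat.sub_lt (by omega) (mem_Icc.1 hj).1)

theorem pos (h : IsNegBinomialOrderKPMF k r p q P) (hk : 1 ≤ k) (hr : 1 ≤ r) (hp : 0 < p)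
    (hq : 0 < q) {n : ℕ} (hn : k * r ≤ n) : 0 < P n := by
  induction n, hn using Nat.le_induction with
  | base => rw [h.apply_base]; positivity
  | succ n hn ih =>
    have hnonneg := h.nonneg hr hp.le hq.le
    have ha : (0 : ℝ) < (n + 1 : ℕ) - k * r := by rw [sub_pos]; norm_cast; omega
    refine pos_of_mul_pos_right ?_ ha.le
    rw [h.mul_apply _ (by omega), ← zero_add ((n + 1 : ℕ) - (k * r : ℝ)), weightedSum_add]
    have h0 := weightedSum_nonneg (k := k) (a := 0) (n := n + 1) hr hp.le le_rfl
      fun _ _ => hnonneg _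
    have hS := apply_le_laggedSum hk hp.le hnonneg n
    have : 0 < ((n + 1 : ℕ) - (k * r : ℝ)) * laggedSum k p P (n + 1) := by
      apply mul_pos ha; linarith
    positivity

/-- At `n = k·r` both sides vanish. -/
theorem mul_apply_of_le (h : IsNegBinomialOrderKPMF k r p q P) (hN : 0 < k * r) {n : ℕ}
    (hn : k * r ≤ n) : ((n : ℝ) - k * r) * P n = q * weightedSum k r p P (n - k * r) n := by
  rcases hn.lt_or_eq with hn | rfl
  · exact h.mul_apply n hn
  · rw [weightedSum, sum_eq_zero fun j hj => ?_]
    · simp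
    rw [h.apply_of_lt _ (by have := (mem_Icc.1 hj).1; omega), mul_zero]

theorem mul_apply_add_one (h : IsNegBinomialOrderKPMF k r p q P) (hpq : p + q = 1)
    (hN : 0 < k * r) {m : ℕ} (hm : m < k) :
    ((m : ℝ) + 1) * P (k * r + m + 1) =
      m * P (k * r + m) + q * r * laggedSum k p P (k * r + m + 1) := by
  have hnext := h.mul_apply (k * r + m + 1) (by omega)
  have hcur := h.mul_apply_of_le hN (n := k * r + m) (by omega)
  have hsucc := weightedSum_succ (k := k) (r := r) (p := p) m (n := k * r + m)
    (h.apply_of_lt _ (by omega))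
  have hsplit := weightedSum_add (k := k) (r := r) (p := p) (P := P) (m + 1 - r) r
    (k * r + m + 1)
  push_cast at hnext hcur
  rw [show (k * r + m + 1 : ℝ) - k * r = m + 1 by ring,
    show (m : ℝ) + 1 = m + 1 - r + r by ring] at hnext
  rw [show (k * r + m : ℝ) - k * r = m by ring] at hcur
  linear_combination hnext + q * hsplit + q * hsucc - p * hcur + m * P (k * r + m) * hpq

theorem apply_lt_apply_add_one (h : IsNegBinomialOrderKPMF k r p q P) (hp : 0 < p)
    (hpq : p + q = 1) (hqr : 1 < q * r) {m : ℕ} (hm : m < k) :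
    P (k * r + m) < P (k * r + m + 1) := by
  have hr := Nat.one_le_of_one_lt_mul_cast hqr
  have hq : 0 < q := pos_of_mul_pos_left (one_pos.trans hqr) r.cast_nonneg
  have hpos := h.pos (by omega) hr hp hq (n := k * r + m) (by omega)
  have hS := apply_le_laggedSum (k := k) (by omega) hp.le (h.nonneg hr hp.le hq.le) (k * r + m)
  have hkey := h.mul_apply_add_one hpq (Nat.mul_pos (by omega) hr) hm
  have hqrS : q * r * P (k * r + m) ≤ q * r * laggedSum k p P (k * r + m + 1) :=
    mul_le_mul_of_nonneg_left hS (by positivity)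
  have hgain : P (k * r + m) < q * r * P (k * r + m) := by nlinarith
  have hm : (0 : ℝ) < m + 1 := by positivity
  exact lt_of_mul_lt_mul_left (by linarith) hm.le

end IsNegBinomialOrderKPMF

theorem pmf_increasing_of_qr_gt_one_general
    (k r : ℕ) (hk : 1 ≤ k)
    (p q : ℝ) (hp0 : 0 < p) (hq : q = 1 - p)
    (P : ℕ → ℝ)
    (hP0 : ∀ n, n < k * r → P n = 0)
    (hPkr : P (k * r) = p ^ (k * r))
    (hrec : ∀ n, k * r < n →
      ((n : ℝ) - k * r) * P n =
        q * ∑ j ∈ Finset.Icc 1 k,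
          ((n : ℝ) - k * r + j * (r - 1)) * p ^ (j - 1) * P (n - j))
    (hqr : q * r > 1) :
    ∀ n : ℕ, k * r ≤ n → n ≤ k * r + k → P n > P (n - 1) := by
  have h : IsNegBinomialOrderKPMF k r p q P := ⟨hP0, hPkr, hrec⟩
  have hN : 0 < k * r := Nat.mul_pos hk (Nat.one_le_of_one_lt_mul_cast hqr)
  intro n hn hnk
  obtain ⟨m, rfl⟩ := Nat.exists_eq_add_of_le hn
  cases m with
  | zero =>
    rw [add_zero, hP0 (k * r - 1) (by omega), hPkr]
    exact pow_pos hp0 _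
  | succ m =>
    simpa [← add_assoc] using h.apply_lt_apply_add_one hp0 (by rw [hq]; ring) hqr (by omega)

/-- Lemma 2.1: if `q·r > 1`, then `P n > P (n-1)` for every `n` with
`k·r ≤ n ≤ k·r + k`. -/
theorem pmf_increasing_of_qr_gt_one
    (k r : ℕ) (hk : 1 ≤ k) (hr : 1 ≤ r)
    (p q : ℝ) (hp0 : 0 < p) (hp1 : p < 1) (hq : q = 1 - p)
    (P : ℕ → ℝ)
    (hP0 : ∀ n, n < k * r → P n = 0)
    (hPkr : P (k * r) = p ^ (k * r))
    (hrec : ∀ n, k * r < n →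
      ((n : ℝ) - k * r) * P n =
        q * ∑ j ∈ Finset.Icc 1 k,
          ((n : ℝ) - k * r + j * (r - 1)) * p ^ (j - 1) * P (n - j))
    (hqr : q * r > 1) :
    ∀ n : ℕ, k * r ≤ n → n ≤ k * r + k → P n > P (n - 1) :=
  pmf_increasing_of_qr_gt_one_general k r hk p q hp0 hq P hP0 hPkr hrec hqr
end

section
/- If q·r = 1, then P(k·r + 1) = P(k·r), and for every natural number n with k·r + 2 ≤ n ≤ k·r + k one has P(n) > P(n - 1). -/
/-- Remark after Lemma 2.1: if `q·r = 1`, then `P (k·r + 1) = P (k·r)`, and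
`P n > P (n-1)` for every `n` with `k·r + 2 ≤ n ≤ k·r + k`. -/
theorem pmf_increasing_of_qr_eq_one
    (k r : ℕ) (hk : 1 ≤ k) (hr : 1 ≤ r)
    (p q : ℝ) (hp0 : 0 < p) (hp1 : p < 1) (hq : q = 1 - p)
    (P : ℕ → ℝ)
    (hP0 : ∀ n, n < k * r → P n = 0)
    (hPkr : P (k * r) = p ^ (k * r))
    (hrec : ∀ n, k * r < n →
      ((n : ℝ) - k * r) * P n =
        q * ∑ j ∈ Finset.Icc 1 k,
          ((n : ℝ) - k * r + j * (r - 1)) * p ^ (j - 1) * P (n - j))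
    (hqr : q * r = 1) :
    P (k * r + 1) = P (k * r) ∧
      ∀ n : ℕ, k * r + 2 ≤ n → n ≤ k * r + k → P n > P (n - 1) := by
  have hm1 : 1 ≤ k * r := Nat.one_le_iff_ne_zero.mpr (by positivity)
  have hq0 : 0 < q := by rw [hq]; linarith
  have hqp : q * ((r : ℝ) - 1) = p := by
    have h1 : q * ((r : ℝ) - 1) = q * r - q := by ring
    rw [h1, hqr, hq]; ring
  set m := k * r with hm
  set A : ℕ → ℝ := fun i => P (m + i) with hA
  have hA0 : 0 < A 0 := by
    simp only [hA, Nat.add_zero, hPkr]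
    positivity
  have key : ∀ i, 1 ≤ i → i ≤ k →
      (i : ℝ) * A i
        = ∑ t ∈ Finset.range i, (q * i + ((t : ℝ) + 1) * p) * p ^ t * A (i - 1 - t) := by
    intro i hi1 hik
    have h := hrec (m + i) (by omega)
    have hL : ((m + i : ℕ) : ℝ) - (k : ℝ) * r = i := by
      push_cast [hm]; ring
    rw [hL] at h
    have hsum : ∑ j ∈ Finset.Icc 1 k,
        ((i : ℝ) + j * ((r : ℝ) - 1)) * p ^ (j - 1) * P (m + i - j)
        = ∑ j ∈ Finset.Icc 1 i,
        ((i : ℝ) + j * ((r : ℝ) - 1)) * p ^ (j - 1) * P (m + i - j) := by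
      symm
      apply Finset.sum_subset
      · intro j hj; simp only [Finset.mem_Icc] at *; omega
      · intro j hj hji
        simp only [Finset.mem_Icc] at hj hji
        have hz : P (m + i - j) = 0 := hP0 _ (by omega)
        rw [hz, mul_zero]
    rw [hsum, ← Finset.Ico_add_one_right_eq_Icc, Finset.sum_Ico_eq_sum_range] at h
    simp only [Nat.add_sub_cancel_left, Nat.succ_sub_one] at h
    rw [h, Finset.mul_sum]
    apply Finset.sum_congr rfl
    intro t ht
    simp only [Finset.mem_range] at ht
    have e1 : m + i - (1 + t) = m + (i - 1 - t) := by omega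
    rw [e1]
    show q * (((i : ℝ) + ((1 + t : ℕ) : ℝ) * ((r : ℝ) - 1)) * p ^ t * A (i - 1 - t))
        = (q * i + ((t : ℝ) + 1) * p) * p ^ t * A (i - 1 - t)
    push_cast
    linear_combination (1 + (t : ℝ)) * p ^ t * A (i - 1 - t) * hqp
  have hA1 : A 1 = A 0 := by
    have h := key 1 le_rfl hk
    simp only [Finset.range_one, Finset.sum_singleton, Nat.cast_zero, Nat.cast_one,
      pow_zero] at h
    have : q + p = 1 := by rw [hq]; ring
    nlinarith [h]
  have step : ∀ n, n + 2 ≤ k →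
      ((n : ℝ) + 2) * A (n + 2) = ((n : ℝ) + 2) * A (n + 1)
        + p * ∑ t ∈ Finset.range (n + 1), p ^ t * A (n - t) := by
    intro n hnk
    have h2 := key (n + 2) (by omega) hnk
    have h1 := key (n + 1) (by omega) (by omega)
    rw [Finset.sum_range_succ'] at h2
    have hterm : ∀ t ∈ Finset.range (n + 1),
        (q * ((n + 2 : ℕ) : ℝ) + (((t + 1 : ℕ) : ℝ) + 1) * p) * p ^ (t + 1)
            * A (n + 2 - 1 - (t + 1))
          = p * ((q * ((n + 1 : ℕ) : ℝ) + ((t : ℝ) + 1) * p) * p ^ t * A (n + 1 - 1 - t))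
            + p * (p ^ t * A (n - t)) := by
      intro t ht
      have e1 : n + 2 - 1 - (t + 1) = n - t := by omega
      have e2 : n + 1 - 1 - t = n - t := by omega
      rw [e1, e2]
      have hqp1 : q + p = 1 := by rw [hq]; ring
      push_cast
      linear_combination p ^ (t + 1) * A (n - t) * hqp1
    rw [Finset.sum_congr rfl hterm, Finset.sum_add_distrib, ← Finset.mul_sum,
      ← Finset.mul_sum, ← h1] at h2
    push_cast at h2 ⊢
    have hqp1 : q + p = 1 := by rw [hq]; ring
    linear_combination h2 + ((n : ℝ) + 2) * A (n + 1) * hqp1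
  have pos : ∀ i, i ≤ k → 0 < A i := by
    intro i
    induction i using Nat.strong_induction_on with
    | _ i ih =>
      intro hik
      rcases Nat.lt_or_ge i 2 with h2 | h2
      · interval_cases i
        · exact hA0
        · rw [hA1]; exact hA0
      · obtain ⟨n, rfl⟩ : ∃ n, i = n + 2 := ⟨i - 2, by omega⟩
        have hstep := step n hik
        have hS : 0 < ∑ t ∈ Finset.range (n + 1), p ^ t * A (n - t) :=
          Finset.sum_pos
            (fun t ht => mul_pos (pow_pos hp0 t) (ih (n - t) (by omega) (by omega)))
            (by simp)
        have hprev : 0 < A (n + 1) := ih (n + 1) (by omega) (by omega)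
        have hn2 : (0 : ℝ) < (n : ℝ) + 2 := by positivity
        nlinarith [hstep, hS, hprev, mul_pos hp0 hS]
  have incr : ∀ n, n + 2 ≤ k → A (n + 1) < A (n + 2) := by
    intro n hnk
    have hstep := step n hnk
    have hS : 0 < ∑ t ∈ Finset.range (n + 1), p ^ t * A (n - t) :=
      Finset.sum_pos
        (fun t ht => mul_pos (pow_pos hp0 t) (pos (n - t) (by omega)))
        (by simp)
    have hn2 : (0 : ℝ) < (n : ℝ) + 2 := by positivity
    nlinarith [hstep, mul_pos hp0 hS]
  constructor
  · have := hA1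
    simp only [hA, Nat.add_zero] at this
    exact this
  · intro n h2n hnk
    obtain ⟨i, rfl⟩ : ∃ i, n = m + (i + 2) := ⟨n - m - 2, by omega⟩
    have h := incr i (by omega)
    have heq : m + (i + 2) - 1 = m + (i + 1) := by omega
    rw [heq]
    simpa only [hA, ← Nat.add_assoc] using h
end

section
/- For every integer v ≥ 1, v·Δ(v) = (-p·v + q·(r - 1))·P(k·r + v - 1) + q·∑_{j=2}^{k} (v + j·(r - 1))·p^(j-1)·P(k·r + v - j). -/
/-- Equation (2.1): for every integer `v ≥ 1`,
`v·Δ(v) = (-p·v + q·(r-1))·P(k·r+v-1) + q·∑_{j=2}^{k} (v + j·(r-1))·p^(j-1)·P(k·r+v-j)`. -/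
theorem delta_recurrence_first
    (k r : ℕ) (hk : 1 ≤ k) (hr : 1 ≤ r)
    (p q : ℝ) (hp0 : 0 < p) (hp1 : p < 1) (hq : q = 1 - p)
    (P : ℕ → ℝ)
    (hP0 : ∀ n, n < k * r → P n = 0)
    (hPkr : P (k * r) = p ^ (k * r))
    (hrec : ∀ n, k * r < n →
      ((n : ℝ) - k * r) * P n =
        q * ∑ j ∈ Finset.Icc 1 k,
          ((n : ℝ) - k * r + j * (r - 1)) * p ^ (j - 1) * P (n - j))
    (Δ : ℕ → ℝ)
    (hΔ : ∀ v : ℕ, 1 ≤ v → Δ v = P (k * r + v) - P (k * r + v - 1)) :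
    ∀ v : ℕ, 1 ≤ v →
      (v : ℝ) * Δ v = (-(p * v) + q * (r - 1)) * P (k * r + v - 1) +
        q * ∑ j ∈ Finset.Icc 2 k,
          ((v : ℝ) + j * (r - 1)) * p ^ (j - 1) * P (k * r + v - j) := by
  intro v hv
  have hlt : k * r < k * r + v := by omega
  have h := hrec (k * r + v) hlt
  have hcast : ((k * r + v : ℕ) : ℝ) - (k:ℝ) * r = (v : ℝ) := by
    push_cast; ring
  rw [hcast] at h
  have hsplit : Finset.Icc 1 k = insert 1 (Finset.Icc 2 k) := by
    ext x; simp [Finset.mem_Icc]; omega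
  rw [hsplit, Finset.sum_insert (by simp [Finset.mem_Icc])] at h
  simp only [Nat.cast_one, pow_zero, one_mul, mul_one] at h
  rw [hΔ v hv]
  have hsum : ∀ j ∈ Finset.Icc 2 k,
      ((v : ℝ) + j * (r - 1)) * p ^ (j - 1) * P (k * r + v - j) =
      ((v : ℝ) + j * (r - 1)) * p ^ (j - 1) * P (k * r + v - j) := fun _ _ => rfl
  have : (v : ℝ) * P (k * r + v) =
      q * (((v : ℝ) + 1 * ((r : ℝ) - 1)) * P (k * r + v - 1)) +
      q * ∑ j ∈ Finset.Icc 2 k,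
        ((v : ℝ) + j * (r - 1)) * p ^ (j - 1) * P (k * r + v - j) := by
    rw [h]; ring
  rw [mul_sub, this, hq]
  ring
end

section
/- For every integer v ≥ k + 1, v·(v - 1)·Δ(v) = f(v)·P(k·r + v - 1 - k) + q·(r - 1)·∑_{j=1}^{k-1} (∑_{i=1}^{j} (v - 1 + i·(q·r - 1))·p^(i-1))·Δ(v - 1 - j). -/
/-!
Write `x j = P (k r + v - 1 - j)`. The recurrence at `n = k r + v` and at `n = k r + v - 1`
expresses `v P(k r + v)` and `(v - 1) x 0` through `x 0, …, x (k-1)` and `x 1, …, x k`.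
Their combination with weights `v - 1` and `q (v + r - 1) - v` has `v (v - 1) Δ(v)` on the left,
cancels `x 0`, and leaves the coefficient `q (r - 1) (v - 1 + j (q r - 1)) p^(j-1)` on `x j` for
`1 ≤ j < k`. Summation by parts against `Δ(v - 1 - j) = x j - x (j + 1)` turns these coefficients
into the partial sums `weight j`, and the coefficient left on `x k` is `f v` once the
arithmetic–geometric sum `weight (k - 1)` is evaluated. Both identities go by induction on `k`.
-/

open Finset

namespace NegativeBinomialOrderK

section CommRing

variable {R : Type*} [CommRing R] (p q r v : R)

def weight (j : ℕ) : R := ∑ i ∈ Icc 1 j, (v - 1 + i * (q * r - 1)) * p ^ (i - 1)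

@[simp] lemma weight_zero : weight p q r v 0 = 0 := by simp [weight]

lemma weight_succ (j : ℕ) :
    weight p q r v (j + 1) = weight p q r v j + (v - 1 + (j + 1) * (q * r - 1)) * p ^ j := by
  rw [weight, sum_Icc_succ_top (by omega)]
  push_cast
  simp [weight]

theorem recurrence_combination_eq (hq : q = 1 - p) (x : ℕ → R) (m : ℕ) :
    (v - 1) * (q * ∑ j ∈ Icc 1 (m + 1), (v + j * (r - 1)) * p ^ (j - 1) * x (j - 1))
      + (q * (v + r - 1) - v) * (q * ∑ j ∈ Icc 1 (m + 1), (v - 1 + j * (r - 1)) * p ^ (j - 1) * x j)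
      - q * (v + r - 1) * ((v - 1) * x 0)
    = q * ((q * (v + r - 1) - v) * (v - 1 + (m + 1) * (r - 1)) * p ^ m
          + (r - 1) * weight p q r v m) * x (m + 1)
      + q * (r - 1) * ∑ j ∈ Icc 1 m, weight p q r v j * (x j - x (j + 1)) := by
  induction m with
  | zero =>
    simp only [zero_add, Icc_self, sum_singleton, Icc_eq_empty_of_lt one_pos, sum_empty, weight_zero]
    ring
  | succ m ih =>
    have h : 1 ≤ m + 1 + 1 := by omega
    rw [sum_Icc_succ_top h, sum_Icc_succ_top h,
      sum_Icc_succ_top (by omega) (fun j => weight p q r v j * (x j - x (j + 1))), weight_succ]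
    subst hq
    push_cast
    linear_combination ih

end CommRing

theorem last_coeff_eq {K : Type*} [Field K] (p q r v : K) (hq : q = 1 - p) (hq0 : q ≠ 0) (m : ℕ) :
    q * ((q * (v + r - 1) - v) * (v - 1 + (m + 1) * (r - 1)) * p ^ m
          + (r - 1) * weight p q r v m)
    = -(q * p ^ (m + 1)) * v ^ 2
      + (p ^ (m + 1) * (q - ((m + 1) * q + q + 1) * (r - 1)) + (r - 1)) * v
      + (r - 1) * ((r - 1) * (1 - p ^ (m + 1) * (1 + (m + 1) * q))
          + p ^ (m + 1) * ((m + 1) + q) - (1 - p ^ (m + 1)) / q) := by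
  induction m with
  | zero =>
    rw [pow_one, ← hq, div_self hq0, weight_zero]
    subst hq
    push_cast
    ring
  | succ m ih =>
    have hdiv : (1 - p ^ (m + 1 + 1)) / q = (1 - p ^ (m + 1)) / q + p ^ (m + 1) := by
      field_simp; subst hq; ring
    rw [hdiv, weight_succ]
    push_cast
    subst hq
    linear_combination ih

lemma recurrence_at_add {k r : ℕ} {p q : ℝ} {P : ℕ → ℝ}
    (hrec : ∀ n, k * r < n →
      ((n : ℝ) - k * r) * P n =
        q * ∑ j ∈ Icc 1 k, ((n : ℝ) - k * r + j * (r - 1)) * p ^ (j - 1) * P (n - j))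
    (w : ℕ) (hw : 1 ≤ w) :
    (w : ℝ) * P (k * r + w) =
      q * ∑ j ∈ Icc 1 k, ((w : ℝ) + j * (r - 1)) * p ^ (j - 1) * P (k * r + w - j) := by
  have h := hrec (k * r + w) (by omega)
  push_cast at h
  simpa only [add_sub_cancel_left] using h

end NegativeBinomialOrderK

open NegativeBinomialOrderK in
theorem delta_recurrence_second_general
    (k r : ℕ) (hk : 1 ≤ k)
    (p q : ℝ) (hp1 : p < 1) (hq : q = 1 - p)
    (P : ℕ → ℝ)
    (hrec : ∀ n, k * r < n →
      ((n : ℝ) - k * r) * P n =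
        q * ∑ j ∈ Finset.Icc 1 k,
          ((n : ℝ) - k * r + j * (r - 1)) * p ^ (j - 1) * P (n - j))
    (Δ : ℕ → ℝ)
    (hΔ : ∀ v : ℕ, 1 ≤ v → Δ v = P (k * r + v) - P (k * r + v - 1))
    (f : ℝ → ℝ)
    (hf : ∀ v : ℝ, f v =
      -(q * p ^ k) * v ^ 2 + (p ^ k * (q - (k * q + q + 1) * (r - 1)) + (r - 1)) * v +
        (r - 1) * ((r - 1) * (1 - p ^ k * (1 + k * q)) + p ^ k * (k + q) - (1 - p ^ k) / q)) :
    ∀ v : ℕ, k + 1 ≤ v →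
      (v : ℝ) * ((v : ℝ) - 1) * Δ v = f v * P (k * r + v - 1 - k) +
        q * (r - 1) * ∑ j ∈ Finset.Icc 1 (k - 1),
          (∑ i ∈ Finset.Icc 1 j, ((v : ℝ) - 1 + i * (q * r - 1)) * p ^ (i - 1)) *
            Δ (v - 1 - j) := by
  intro v hv
  obtain ⟨m, rfl⟩ : ∃ m, k = m + 1 := ⟨k - 1, by omega⟩
  set x : ℕ → ℝ := fun j => P ((m + 1) * r + v - 1 - j)
  have hE1 : (v : ℝ) * P ((m + 1) * r + v) =
      q * ∑ j ∈ Icc 1 (m + 1), ((v : ℝ) + j * (r - 1)) * p ^ (j - 1) * x (j - 1) := by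
    rw [recurrence_at_add hrec v (by omega)]
    refine congrArg (q * ·) (sum_congr rfl fun j hj => ?_)
    simp only [x, show (m + 1) * r + v - 1 - (j - 1) = (m + 1) * r + v - j by grind]
  have hE2 : ((v : ℝ) - 1) * x 0 =
      q * ∑ j ∈ Icc 1 (m + 1), ((v : ℝ) - 1 + j * (r - 1)) * p ^ (j - 1) * x j := by
    have h := recurrence_at_add hrec (v - 1) (by omega)
    rw [Nat.cast_sub (by omega), Nat.cast_one, ← Nat.add_sub_assoc (by omega)] at h
    simpa [x] using h
  have hΔsum : ∑ j ∈ Icc 1 m,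
        (∑ i ∈ Icc 1 j, ((v : ℝ) - 1 + i * (q * r - 1)) * p ^ (i - 1)) * Δ (v - 1 - j) =
      ∑ j ∈ Icc 1 m, weight p q r v j * (x j - x (j + 1)) := by
    refine sum_congr rfl fun j hj => ?_
    rw [mem_Icc] at hj
    rw [hΔ _ (by omega), show (m + 1) * r + (v - 1 - j) = (m + 1) * r + v - 1 - j by omega,
      show (m + 1) * r + v - 1 - j - 1 = (m + 1) * r + v - 1 - (j + 1) by omega]
    rfl
  rw [hf, hΔ v (by omega), Nat.add_sub_cancel, hΔsum]
  push_cast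
  rw [← last_coeff_eq p q r v hq (by linarith) m]
  linear_combination recurrence_combination_eq p q r v hq x m + ((v : ℝ) - 1) * hE1
    + (q * ((v : ℝ) + r - 1) - v) * hE2

/-- Equation (2.2): for every integer `v ≥ k + 1`,
`v·(v-1)·Δ(v) = f(v)·P(k·r+v-1-k)
  + q·(r-1)·∑_{j=1}^{k-1} (∑_{i=1}^{j} (v-1+i·(q·r-1))·p^(i-1))·Δ(v-1-j)`. -/
theorem delta_recurrence_second
    (k r : ℕ) (hk : 1 ≤ k) (hr : 1 ≤ r)
    (p q : ℝ) (hp0 : 0 < p) (hp1 : p < 1) (hq : q = 1 - p)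
    (P : ℕ → ℝ)
    (hP0 : ∀ n, n < k * r → P n = 0)
    (hPkr : P (k * r) = p ^ (k * r))
    (hrec : ∀ n, k * r < n →
      ((n : ℝ) - k * r) * P n =
        q * ∑ j ∈ Finset.Icc 1 k,
          ((n : ℝ) - k * r + j * (r - 1)) * p ^ (j - 1) * P (n - j))
    (Δ : ℕ → ℝ)
    (hΔ : ∀ v : ℕ, 1 ≤ v → Δ v = P (k * r + v) - P (k * r + v - 1))
    (f : ℝ → ℝ)
    (hf : ∀ v : ℝ, f v =
      -(q * p ^ k) * v ^ 2 + (p ^ k * (q - (k * q + q + 1) * (r - 1)) + (r - 1)) * v +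
        (r - 1) * ((r - 1) * (1 - p ^ k * (1 + k * q)) + p ^ k * (k + q) - (1 - p ^ k) / q)) :
    ∀ v : ℕ, k + 1 ≤ v →
      (v : ℝ) * ((v : ℝ) - 1) * Δ v = f v * P (k * r + v - 1 - k) +
        q * (r - 1) * ∑ j ∈ Finset.Icc 1 (k - 1),
          (∑ i ∈ Finset.Icc 1 j, ((v : ℝ) - 1 + i * (q * r - 1)) * p ^ (i - 1)) *
            Δ (v - 1 - j) :=
  delta_recurrence_second_general k r hk p q hp1 hq P hrec Δ hΔ f hf
end

section
/- Assume r ≥ 2 and p = (r - 1)/r (so q = 1/r). Then for every integer v ≥ k + 1, v·Δ(v) = ((r - 1)·(1 - p^(k-1)) - ((v - 1)/r + k·p)·p^k)·P(k·r + v - 1 - k) + (r - 1)·∑_{j=1}^{k-1} (1 - p^j)·Δ(v - 1 - j). -/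
/-!
Write `n = k·r + v` and `A j = P (n - j)`, so that `v·Δ(v) = v·A 0 - v·A 1`. Since `q = 1/r`,
subtracting `p` times the recurrence at `n - 1` from the recurrence at `n` expresses
`v·A 0 - p·(v - 1)·A 1` as a difference of two sums whose weights `p^(j-1)` are offset by one
index. Summation by parts turns that difference into the differences
`A (j+1) - A (j+2) = Δ (v - 1 - j)`, a boundary term in `A (k+1)`, and the multiple
`(v - 1 + r)/r = v - p·(v - 1)` of `A 1` that is still missing on the left.
-/

open Finset

lemma sum_by_parts_weighted (t w : ℝ) (ht : t ≠ 0) (A : ℕ → ℝ) (m : ℕ) :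
    (1 / t) * ∑ j ∈ Icc 1 (m + 1), ((w + 1) + j * (t - 1)) * ((t - 1) / t) ^ (j - 1) * A j
        - ((t - 1) / t / t) *
          ∑ j ∈ Icc 1 (m + 1), (w + j * (t - 1)) * ((t - 1) / t) ^ (j - 1) * A (j + 1)
      = (w + t) / t * A 1
        + (t - 1) * ∑ j ∈ Icc 1 m, (1 - ((t - 1) / t) ^ j) * (A (j + 1) - A (j + 2))
        + ((t - 1) * (1 - ((t - 1) / t) ^ m)
            - (w / t + (m + 1 : ℕ) * ((t - 1) / t)) * ((t - 1) / t) ^ (m + 1)) * A (m + 2) := by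
  induction m with
  | zero =>
    simp only [zero_add, Icc_self, sum_singleton, Icc_eq_empty_of_lt zero_lt_one, sum_empty]
    field_simp
    ring
  | succ m ih =>
    simp only [sum_Icc_succ_top (show 1 ≤ m + 1 + 1 by omega)]
    simp only [sum_Icc_succ_top (show 1 ≤ m + 1 by omega), Nat.add_sub_cancel, pow_succ,
      Nat.cast_add, Nat.cast_one] at ih ⊢
    generalize ((t - 1) / t) ^ m = a at ih ⊢
    linear_combination (norm := (field_simp; ring_nf)) ih

lemma recurrence_at_offset {k r : ℕ} {p q : ℝ} {P : ℕ → ℝ}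
    (hrec : ∀ n, k * r < n →
      ((n : ℝ) - k * r) * P n =
        q * ∑ j ∈ Icc 1 k, ((n : ℝ) - k * r + j * (r - 1)) * p ^ (j - 1) * P (n - j))
    {v : ℕ} (hv : 0 < v) :
    (v : ℝ) * P (k * r + v) =
      q * ∑ j ∈ Icc 1 k, ((v : ℝ) + j * (r - 1)) * p ^ (j - 1) * P (k * r + v - j) := by
  simpa using hrec (k * r + v) (by omega)

theorem delta_recurrence_boundary_case_general
    (k r : ℕ) (hk : 1 ≤ k) (hr : 2 ≤ r)
    (p q : ℝ) (hp : p = ((r : ℝ) - 1) / r) (hq : q = 1 - p)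
    (P : ℕ → ℝ)
    (hrec : ∀ n, k * r < n →
      ((n : ℝ) - k * r) * P n =
        q * ∑ j ∈ Finset.Icc 1 k,
          ((n : ℝ) - k * r + j * (r - 1)) * p ^ (j - 1) * P (n - j))
    (Δ : ℕ → ℝ)
    (hΔ : ∀ v : ℕ, 1 ≤ v → Δ v = P (k * r + v) - P (k * r + v - 1)) :
    ∀ v : ℕ, k + 1 ≤ v →
      (v : ℝ) * Δ v =
        (((r : ℝ) - 1) * (1 - p ^ (k - 1)) - (((v : ℝ) - 1) / r + k * p) * p ^ k) *
            P (k * r + v - 1 - k) +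
          ((r : ℝ) - 1) * ∑ j ∈ Finset.Icc 1 (k - 1), (1 - p ^ j) * Δ (v - 1 - j) := by
  intro v hv
  obtain ⟨m, rfl⟩ : ∃ m, k = m + 1 := ⟨k - 1, by omega⟩
  subst hp hq
  have hr0 : (r : ℝ) ≠ 0 := by positivity
  have h_now := recurrence_at_offset hrec (v := v) (by omega)
  have h_prev := recurrence_at_offset hrec (v := v - 1) (by omega)
  rw [Nat.cast_pred (by omega)] at h_prev
  simp only [show ∀ j, (m + 1) * r + (v - 1) - j = (m + 1) * r + v - (j + 1) by omega] at h_prev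
  rw [show (m + 1) * r + (v - 1) = (m + 1) * r + v - 1 by omega] at h_prev
  have h_parts := sum_by_parts_weighted r ((v : ℝ) - 1) hr0 (fun j => P ((m + 1) * r + v - j)) m
  have hΔ_shift : ∀ j ∈ Icc 1 m,
      Δ (v - 1 - j) = P ((m + 1) * r + v - (j + 1)) - P ((m + 1) * r + v - (j + 2)) := by
    intro j hj
    obtain ⟨hj1, hjm⟩ := mem_Icc.mp hj
    rw [hΔ _ (by omega), show (m + 1) * r + (v - 1 - j) = (m + 1) * r + v - (j + 1) by omega,
      show (m + 1) * r + v - (j + 1) - 1 = (m + 1) * r + v - (j + 2) by omega]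
  rw [hΔ v (by omega), sum_congr rfl (fun j hj => by rw [hΔ_shift j hj]),
    show (m + 1) * r + v - 1 - (m + 1) = (m + 1) * r + v - (m + 2) by omega]
  simp only [sub_add_cancel, Nat.add_sub_cancel] at h_parts ⊢
  linear_combination (norm := (field_simp; ring_nf)) h_now - ((r - 1) / r) * h_prev + h_parts

/-- Equation (2.3): for `r ≥ 2` and `p = (r-1)/r` (so `q = 1/r`), for every
integer `v ≥ k + 1`,
`v·Δ(v) = ((r-1)·(1-p^(k-1)) - ((v-1)/r + k·p)·p^k)·P(k·r+v-1-k)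
  + (r-1)·∑_{j=1}^{k-1} (1-p^j)·Δ(v-1-j)`. -/
theorem delta_recurrence_boundary_case
    (k r : ℕ) (hk : 1 ≤ k) (hr : 2 ≤ r)
    (p q : ℝ) (hp : p = ((r : ℝ) - 1) / r) (hq : q = 1 - p)
    (P : ℕ → ℝ)
    (hP0 : ∀ n, n < k * r → P n = 0)
    (hPkr : P (k * r) = p ^ (k * r))
    (hrec : ∀ n, k * r < n →
      ((n : ℝ) - k * r) * P n =
        q * ∑ j ∈ Finset.Icc 1 k,
          ((n : ℝ) - k * r + j * (r - 1)) * p ^ (j - 1) * P (n - j))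
    (Δ : ℕ → ℝ)
    (hΔ : ∀ v : ℕ, 1 ≤ v → Δ v = P (k * r + v) - P (k * r + v - 1)) :
    ∀ v : ℕ, k + 1 ≤ v →
      (v : ℝ) * Δ v =
        (((r : ℝ) - 1) * (1 - p ^ (k - 1)) - (((v : ℝ) - 1) / r + k * p) * p ^ k) *
            P (k * r + v - 1 - k) +
          ((r : ℝ) - 1) * ∑ j ∈ Finset.Icc 1 (k - 1), (1 - p ^ j) * Δ (v - 1 - j) :=
  delta_recurrence_boundary_case_general k r hk hr p q hp hq P hrec Δ hΔ
end

section
/- Assume k ≥ 2, r ≥ 2 and p = 1/2 (so q = 1/2), and set M = (r - 1)·(2^(k+1) - k - 2). Then f(M) = (r - 1)·((k + 3)/2^(k+1) - 1) and f(M - 1) = (r - 2)/2^k; in particular f(M) < 0 and f(M - 1) ≥ 0. -/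
noncomputable def halfQuadratic (k r : ℕ) (v : ℝ) : ℝ :=
  -(1 / 2 * (1 / 2) ^ k) * v ^ 2 +
    ((1 / 2) ^ k * (1 / 2 - (k * (1 / 2) + 1 / 2 + 1) * (r - 1)) + (r - 1)) * v +
    (r - 1) * ((r - 1) * (1 - (1 / 2) ^ k * (1 + k * (1 / 2))) + (1 / 2) ^ k * (k + 1 / 2) -
      (1 - (1 / 2) ^ k) / (1 / 2))

theorem halfQuadratic_upperBound (k r : ℕ) :
    halfQuadratic k r ((r - 1) * (2 ^ (k + 1) - k - 2)) = (r - 1) * ((k + 3) / 2 ^ (k + 1) - 1) := by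
  simp only [halfQuadratic, div_pow, one_pow]
  field_simp
  ring

theorem halfQuadratic_upperBound_sub_one (k r : ℕ) :
    halfQuadratic k r ((r - 1) * (2 ^ (k + 1) - k - 2) - 1) = (r - 2) / 2 ^ k := by
  simp only [halfQuadratic, div_pow, one_pow]
  field_simp
  ring

theorem Nat.add_three_lt_two_pow_succ {k : ℕ} (hk : 2 ≤ k) : k + 3 < 2 ^ (k + 1) := by
  induction k, hk using Nat.le_induction with
  | base => norm_num
  | succ n _ ih => rw [pow_succ]; omega

theorem add_three_div_two_pow_succ_lt_one {k : ℕ} (hk : 2 ≤ k) :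
    ((k : ℝ) + 3) / 2 ^ (k + 1) < 1 := by
  rw [div_lt_one (by positivity)]
  exact_mod_cast Nat.add_three_lt_two_pow_succ hk

/-- Values of `f` used in the proof of Theorem 2.3: for `k, r ≥ 2` and `p = 1/2`
(so `q = 1/2`), with `M = (r-1)·(2^(k+1) - k - 2)`, one has
`f(M) = (r-1)·((k+3)/2^(k+1) - 1) < 0` and `f(M-1) = (r-2)/2^k ≥ 0`. -/
theorem f_values_at_upper_bound
    (k r : ℕ) (hk : 2 ≤ k) (hr : 2 ≤ r)
    (p q : ℝ) (hp : p = 1 / 2) (hq : q = 1 - p)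
    (f : ℝ → ℝ)
    (hf : ∀ v : ℝ, f v =
      -(q * p ^ k) * v ^ 2 + (p ^ k * (q - (k * q + q + 1) * (r - 1)) + (r - 1)) * v +
        (r - 1) * ((r - 1) * (1 - p ^ k * (1 + k * q)) + p ^ k * (k + q) - (1 - p ^ k) / q))
    (M : ℝ) (hM : M = ((r : ℝ) - 1) * (2 ^ (k + 1) - k - 2)) :
    f M = ((r : ℝ) - 1) * (((k : ℝ) + 3) / 2 ^ (k + 1) - 1) ∧
      f (M - 1) = ((r : ℝ) - 2) / 2 ^ k ∧
      f M < 0 ∧ 0 ≤ f (M - 1) := by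
  have hq' : q = 1 / 2 := by rw [hq, hp]; norm_num
  have hf' : f = halfQuadratic k r := by
    funext v
    rw [hf, hp, hq', halfQuadratic]
  have hfM := halfQuadratic_upperBound k r
  have hfM' := halfQuadratic_upperBound_sub_one k r
  rw [← hM, ← hf'] at hfM hfM'
  have hr' : (2 : ℝ) ≤ r := by exact_mod_cast hr
  refine ⟨hfM, hfM', ?_, ?_⟩
  · rw [hfM]
    exact mul_neg_of_pos_of_neg (by linarith)
      (sub_neg.mpr (add_three_div_two_pow_succ_lt_one hk))
  · rw [hfM']
    exact div_nonneg (by linarith) (by positivity)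
end

section
/- For k = 2, r = 2 and p = 1/2, one has P(6) = P(7) = P(8). -/
/-- Remark 2.4: for `k = 2`, `r = 2` and `p = 1/2`, one has `P 6 = P 7 = P 8`. -/
theorem pmf_equal_k2_r2_phalf
    (k r : ℕ) (hk : k = 2) (hr : r = 2)
    (p q : ℝ) (hp : p = 1 / 2) (hq : q = 1 - p)
    (P : ℕ → ℝ)
    (hP0 : ∀ n, n < k * r → P n = 0)
    (hPkr : P (k * r) = p ^ (k * r))
    (hrec : ∀ n, k * r < n →
      ((n : ℝ) - k * r) * P n =
        q * ∑ j ∈ Finset.Icc 1 k,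
          ((n : ℝ) - k * r + j * (r - 1)) * p ^ (j - 1) * P (n - j)) :
    P 6 = P 7 ∧ P 7 = P 8 := by
  subst hk hr hp hq
  have h3 : P 3 = 0 := hP0 3 (by norm_num)
  have h4 : P 4 = (1/2 : ℝ)^4 := by simpa using hPkr
  have hI : Finset.Icc 1 2 = ({1, 2} : Finset ℕ) := by decide
  have h5 := hrec 5 (by norm_num)
  have h6 := hrec 6 (by norm_num)
  have h7 := hrec 7 (by norm_num)
  have h8 := hrec 8 (by norm_num)
  simp only [hI, Finset.sum_insert (show (1:ℕ) ∉ ({2} : Finset ℕ) by decide), Finset.sum_singleton] at h5 h6 h7 h8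
  norm_num at h5 h6 h7 h8
  constructor <;> nlinarith [h5, h6, h7, h8, h3, h4]
end
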